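/- Let (M,g) be a Riemannian manifold with a smooth function f satisfying the Miao-Tam equation. Then (1/f)(∇|∇f|² - (2Δf/n)∇f) = 2(Ric(∇f) - (R/n)∇f) on the set where f > 0. -/

import Mathlib

open scoped RealInnerProductSpace

/-! Pairing the Miao–Tam equation with `∇f` expresses `Hess f (∇f, ·)`, hence `∇|∇f|²`, through
`Ric(∇f)` and `∇f`; tracing it gives `-nΔf + Δf - fR = n`, which is exactly what turns the
remaining multiple of `∇f` into `-(2R/n) ∇f` after dividing by `f`. -/

section MiaoTam

variable {V : Type*} [NormedAddCommGroup V] [InnerProductSpace ℝ V]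
  {Δ c : ℝ} {H Ric : V → V → ℝ}

theorem miaoTam_trace {ι : Type*} [Fintype ι] (b : OrthonormalBasis ι ℝ V) {R : ℝ}
    (hMT : ∀ u v, -Δ * ⟪u, v⟫ + H u v - c * Ric u v = ⟪u, v⟫)
    (htrH : ∑ i, H (b i) (b i) = Δ) (htrRic : ∑ i, Ric (b i) (b i) = R) :
    -Δ * Fintype.card ι + Δ - c * R = Fintype.card ι := by
  have hsum := Finset.sum_congr rfl fun i (_ : i ∈ Finset.univ) => hMT (b i) (b i)
  simp only [Finset.sum_sub_distrib, Finset.sum_add_distrib, ← Finset.mul_sum, htrH, htrRic,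
    real_inner_self_eq_norm_sq, b.norm_eq_one, one_pow, Finset.sum_const, Finset.card_univ,
    nsmul_eq_mul, mul_one] at hsum
  linarith

theorem miaoTam_hess_eq (hMT : ∀ u v, -Δ * ⟪u, v⟫ + H u v - c * Ric u v = ⟪u, v⟫) (u v : V) :
    H u v = (1 + Δ) * ⟪u, v⟫ + c * Ric u v := by
  linarith [hMT u v]

end MiaoTam

/-- For a function `f` satisfying the Miao-Tam equation, on the set where `f > 0`,
`(1/f)(∇|∇f|² - (2Δf/n)∇f) = 2(Ric(∇f) - (R/n)∇f)`. -/
theorem miaoTam_gradient_identity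
    {M V : Type*} [NormedAddCommGroup V] [InnerProductSpace ℝ V]
    (n : ℕ) (hn : 2 ≤ n) (b : OrthonormalBasis (Fin n) ℝ V)
    (f : M → ℝ) (R : ℝ)
    (lap : (M → ℝ) → M → ℝ)
    (grad : (M → ℝ) → M → V)
    (Hess : (M → ℝ) → M → V → V → ℝ)
    (Ric : M → V → V → ℝ)
    (RicV : M → V → V)
    (hRicV : ∀ x u v, ⟪RicV x u, v⟫ = Ric x u v)
    (hMT : ∀ x u v, (-(lap f x)) * ⟪u, v⟫ + Hess f x u v - f x * Ric x u v = ⟪u, v⟫)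
    (htrHess : ∀ x, ∑ i, Hess f x (b i) (b i) = lap f x)
    (htrRic : ∀ x, ∑ i, Ric x (b i) (b i) = R)
    (hgradnorm : ∀ x u, ⟪grad (fun y => ‖grad f y‖ ^ 2) x, u⟫ = 2 * Hess f x (grad f x) u) :
    ∀ x, 0 < f x →
      (f x)⁻¹ • (grad (fun y => ‖grad f y‖ ^ 2) x - (2 * lap f x / (n : ℝ)) • grad f x)
        = (2 : ℝ) • (RicV x (grad f x) - (R / (n : ℝ)) • grad f x) := by
  intro x hfx
  have htr := miaoTam_trace b (hMT x) (htrHess x) (htrRic x)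
  rw [Fintype.card_fin] at htr
  have hn0 : (n : ℝ) ≠ 0 := by positivity
  refine ext_inner_right ℝ fun v => ?_
  simp only [real_inner_smul_left, inner_sub_left, hgradnorm, hRicV,
    miaoTam_hess_eq (hMT x)]
  field_simp
  linear_combination (-⟪grad f x, v⟫) * htr
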